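/- Let p, q be integers with 1 ≤ p < q. A Britton-reduced word u = a^{α_0} θ_1 a^{α_1} ⋯ θ_k a^{α_k} represents an element of the cyclic subgroup ⟨a⟩ of BS(p,q) if and only if k = 0. Moreover, the map ℤ → BS(p,q), α ↦ (the element represented by a^α), is injective: a^α and a^β represent the same element of BS(p,q) if and only if α = β. -/

import Mathlib

inductive Letter : Type
  | a | A | t | T
  deriving DecidableEq

def bsRel (p q : ℤ) : Set (FreeGroup Bool) :=
  {FreeGroup.of true * (FreeGroup.of false) ^ p * (FreeGroup.of true)⁻¹ * (FreeGroup.of false) ^ (-q)}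

abbrev BS (p q : ℤ) := PresentedGroup (bsRel p q)

def evalLetter (p q : ℤ) : Letter → BS p q
  | .a => PresentedGroup.of false
  | .A => (PresentedGroup.of false)⁻¹
  | .t => PresentedGroup.of true
  | .T => (PresentedGroup.of true)⁻¹

def eval (p q : ℤ) (w : List Letter) : BS p q := (w.map (evalLetter p q)).prod

def aPow (α : ℤ) : List Letter :=
  if 0 ≤ α then List.replicate α.toNat Letter.a else List.replicate (-α).toNat Letter.A

def Geodesic (p q : ℤ) (w : List Letter) : Prop :=
  ∀ v : List Letter, eval p q v = eval p q w → w.length ≤ v.length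

/-- Ranking of letters in the order `t < T < a < A`. -/
def letterIdx : Letter → ℕ
  | .t => 0
  | .T => 1
  | .a => 2
  | .A => 3

/-- Length-lexicographical strict order on words, with letters ordered `t < T < a < A`. -/
def llLt (u v : List Letter) : Prop :=
  u.length < v.length ∨
    (u.length = v.length ∧ List.Lex (· < ·) (u.map letterIdx) (v.map letterIdx))

/-- `IsLlnf p q v w` : `v` is the length-lexicographical normal form of `w`,
i.e. `v` represents the same element as `w` and no word representing this element
precedes `v` in the length-lexicographical order. -/
def IsLlnf (p q : ℤ) (v w : List Letter) : Prop :=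
  eval p q v = eval p q w ∧ ∀ u : List Letter, eval p q u = eval p q w → ¬ llLt u v

/-- A word contains no factors `a a⁻¹` or `a⁻¹ a`. -/
def Reduced (w : List Letter) : Prop :=
  (∀ u v : List Letter, w ≠ u ++ [Letter.a, Letter.A] ++ v) ∧
  (∀ u v : List Letter, w ≠ u ++ [Letter.A, Letter.a] ++ v)

/-- A word is Britton-reduced: it has no factors `a a⁻¹`, `a⁻¹ a`,
`t a^{pμ} t⁻¹` or `t⁻¹ a^{qμ} t` (with `μ ∈ ℤ`). -/
def BrittonReduced (p q : ℤ) (w : List Letter) : Prop :=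
  Reduced w ∧
  (∀ u v : List Letter, ∀ μ : ℤ, w ≠ u ++ [Letter.t] ++ aPow (p * μ) ++ [Letter.T] ++ v) ∧
  (∀ u v : List Letter, ∀ μ : ℤ, w ≠ u ++ [Letter.T] ++ aPow (q * μ) ++ [Letter.t] ++ v)

/-- The t-sequence of a word: its subsequence of letters from `{t, t⁻¹}`. -/
def tSeq (w : List Letter) : List Letter :=
  w.filter (fun c => c == Letter.t || c == Letter.T)

/-- The geodesic length of a group element: the least length of a word representing it. -/
noncomputable def geodesicLength (p q : ℤ) (g : BS p q) : ℕ :=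
  sInf {n : ℕ | ∃ w : List Letter, eval p q w = g ∧ w.length = n}

/-- A valley: every prefix has height `≤ 0` and the total height is `0`,
where the height of a prefix is (number of `t`'s) − (number of `t⁻¹`'s). -/
def IsValley (w : List Letter) : Prop :=
  (∀ u v : List Letter, w = u ++ v → u.count Letter.t ≤ u.count Letter.T) ∧
  w.count Letter.t = w.count Letter.T


/-- The word `a^{α_0} θ_1 a^{α_1} ⋯ θ_k a^{α_k}`. -/
def buildWord (k : ℕ) (αs : Fin (k + 1) → ℤ) (θs : Fin k → Letter) : List Letter :=
  aPow (αs 0) ++ (List.ofFn fun i : Fin k => θs i :: aPow (αs i.succ)).flatten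


/-!
Sending `a` to the generator of `ℤ` and `t` to the stable letter defines a homomorphism from
`BS(p,q)` to the HNN extension of `ℤ` along `pℤ ≃ qℤ`, `pμ ↦ qμ`. A Britton-reduced word maps to a
reduced word of the HNN extension, so by Britton's lemma its image lies in the base group `⟨a⟩`
only if it contains no `t`. And `a` has infinite order because the base group embeds into the HNN
extension.
-/

open Multiplicative HNNExtension

section Words

variable (p q : ℤ)

lemma eval_aPow (α : ℤ) : eval p q (aPow α) = PresentedGroup.of false ^ α := by
  unfold aPow eval
  split_ifs with h
  · simp [evalLetter, ← zpow_natCast, Int.toNat_of_nonneg h]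
  · simp [evalLetter, ← zpow_natCast, Int.toNat_of_nonneg (by omega : 0 ≤ -α)]

lemma eval_buildWord (k : ℕ) (αs : Fin (k + 1) → ℤ) (θs : Fin k → Letter) :
    eval p q (buildWord k αs θs) = PresentedGroup.of false ^ αs 0 *
      (List.ofFn fun i => evalLetter p q (θs i) * PresentedGroup.of false ^ αs i.succ).prod := by
  simp [buildWord, ← eval_aPow, eval, List.map_flatten, List.prod_flatten, List.map_ofFn,
    Function.comp_def]

end Words

section HNN

abbrev intMultiples (n : ℤ) : Subgroup (Multiplicative ℤ) := (zpowGroupHom n).range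

lemma ofAdd_mem_intMultiples_iff (n α : ℤ) : ofAdd α ∈ intMultiples n ↔ n ∣ α := by
  constructor
  · rintro ⟨μ, hμ⟩
    exact ⟨μ.toAdd, by simpa [mul_comm] using (congrArg toAdd hμ).symm⟩
  · rintro ⟨μ, rfl⟩
    exact ⟨ofAdd μ, toAdd.injective (by simp [mul_comm])⟩

lemma zpowGroupHom_int_injective {n : ℤ} (hn : n ≠ 0) :
    Function.Injective (zpowGroupHom n : Multiplicative ℤ →* Multiplicative ℤ) :=
  zpow_left_injective hn

variable {p q : ℤ} (hp : p ≠ 0) (hq : q ≠ 0)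

noncomputable def intMultiplesEquiv : intMultiples p ≃* intMultiples q :=
  (MonoidHom.ofInjective (zpowGroupHom_int_injective hp)).symm.trans
    (MonoidHom.ofInjective (zpowGroupHom_int_injective hq))

lemma intMultiplesEquiv_zpow (x : Multiplicative ℤ) :
    (intMultiplesEquiv hp hq ⟨x ^ p, x, rfl⟩ : Multiplicative ℤ) = x ^ q := by
  have hsymm : (MonoidHom.ofInjective (zpowGroupHom_int_injective hp)).symm ⟨x ^ p, x, rfl⟩ = x :=
    (MulEquiv.symm_apply_eq _).2 rfl
  rw [intMultiplesEquiv, MulEquiv.trans_apply, hsymm, MonoidHom.ofInjective_apply]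
  rfl

abbrev BSHNN := HNNExtension (Multiplicative ℤ) _ _ (intMultiplesEquiv hp hq)

noncomputable def bsToHNN : BS p q →* BSHNN hp hq :=
  PresentedGroup.toGroup (f := fun b => bif b then t else of (ofAdd 1)) <| by
    rintro r rfl
    set x : Multiplicative ℤ := ofAdd 1
    have hconj := equiv_eq_conj (φ := intMultiplesEquiv hp hq) ⟨x ^ p, x, rfl⟩
    rw [intMultiplesEquiv_zpow] at hconj
    simp only [map_mul, map_zpow, FreeGroup.lift_apply_of, cond_true, cond_false]
    rw [← map_zpow of x p, ← map_zpow of x (-q), zpow_neg, map_inv]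
    exact mul_inv_eq_one.2 hconj.symm

lemma bsToHNN_zpow_a (α : ℤ) :
    bsToHNN hp hq (PresentedGroup.of false ^ α) = of (ofAdd α) := by
  rw [map_zpow, bsToHNN, PresentedGroup.toGroup.of, cond_false, ← map_zpow, ← ofAdd_zsmul,
    smul_eq_mul, mul_one]

def tSign : Letter → ℤˣ
  | .T => -1
  | _ => 1

lemma bsToHNN_evalLetter {θ : Letter} (hθ : θ = .t ∨ θ = .T) :
    bsToHNN hp hq (evalLetter p q θ) = t ^ (tSign θ : ℤ) := by
  rcases hθ with rfl | rfl <;>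
    simp [evalLetter, tSign, bsToHNN, PresentedGroup.toGroup.of]

end HNN

lemma bs_zpow_a_injective {p q : ℤ} (hp : p ≠ 0) (hq : q ≠ 0) :
    Function.Injective fun α : ℤ => (PresentedGroup.of false : BS p q) ^ α := by
  intro α β h
  have h' := congrArg (bsToHNN hp hq) h
  simp only [bsToHNN_zpow_a] at h'
  exact ofAdd.injective (of_injective _ h')

section BrittonReduced

variable {p q : ℤ} {k : ℕ} {αs : Fin (k + 1) → ℤ} {θs : Fin k → Letter}

lemma BrittonReduced.not_infix_t_aPow_T {w : List Letter} (hw : BrittonReduced p q w) (μ : ℤ) :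
    ¬ [Letter.t] ++ aPow (p * μ) ++ [Letter.T] <:+: w := by
  rintro ⟨u, v, huv⟩
  exact hw.2.1 u v μ (by simp [← huv])

lemma BrittonReduced.not_infix_T_aPow_t {w : List Letter} (hw : BrittonReduced p q w) (μ : ℤ) :
    ¬ [Letter.T] ++ aPow (q * μ) ++ [Letter.t] <:+: w := by
  rintro ⟨u, v, huv⟩
  exact hw.2.2 u v μ (by simp [← huv])

lemma infix_buildWord (i : ℕ) (hi : i + 1 < k) :
    [θs ⟨i, by omega⟩] ++ aPow (αs (Fin.succ ⟨i, by omega⟩)) ++ [θs ⟨i + 1, hi⟩] <:+: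
      buildWord k αs θs := by
  have hpair := List.isChain_ofFn.1 (List.isChain_isInfix (List.ofFn fun j : Fin k =>
    θs j :: aPow (αs j.succ))) i hi
  refine List.IsInfix.trans ?_ (hpair.flatten.trans (List.suffix_append _ _).isInfix)
  exact List.IsPrefix.isInfix ⟨aPow (αs (Fin.succ ⟨i + 1, hi⟩)), by simp⟩

lemma isChain_of_brittonReduced (hθ : ∀ i, θs i = Letter.t ∨ θs i = Letter.T)
    (hBR : BrittonReduced p q (buildWord k αs θs)) :
    (List.ofFn fun i => (tSign (θs i), ofAdd (αs i.succ))).IsChain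
      fun a b => a.2 ∈ toSubgroup (intMultiples p) (intMultiples q) a.1 → a.1 = b.1 := by
  refine List.isChain_ofFn.2 fun i hi hmem => ?_
  have hinfix := infix_buildWord (αs := αs) (θs := θs) i hi
  rcases hθ ⟨i, by omega⟩ with h | h <;> rcases hθ ⟨i + 1, hi⟩ with h' | h' <;>
    simp only [h, h', tSign] at hmem hinfix ⊢
  · obtain ⟨μ, hμ⟩ := (ofAdd_mem_intMultiples_iff _ _).1 hmem
    exact (hBR.not_infix_t_aPow_T μ (hμ ▸ hinfix)).elim
  · obtain ⟨μ, hμ⟩ := (ofAdd_mem_intMultiples_iff _ _).1 hmem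
    exact (hBR.not_infix_T_aPow_t μ (hμ ▸ hinfix)).elim

def toReducedWord (hθ : ∀ i, θs i = Letter.t ∨ θs i = Letter.T)
    (hBR : BrittonReduced p q (buildWord k αs θs)) :
    NormalWord.ReducedWord (Multiplicative ℤ) (intMultiples p) (intMultiples q) where
  head := ofAdd (αs 0)
  toList := List.ofFn fun i => (tSign (θs i), ofAdd (αs i.succ))
  chain := isChain_of_brittonReduced hθ hBR

lemma prod_toReducedWord (hp : p ≠ 0) (hq : q ≠ 0) (hθ : ∀ i, θs i = Letter.t ∨ θs i = Letter.T)
    (hBR : BrittonReduced p q (buildWord k αs θs)) :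
    (toReducedWord hθ hBR).prod (intMultiplesEquiv hp hq) =
      bsToHNN hp hq (eval p q (buildWord k αs θs)) := by
  simp [NormalWord.ReducedWord.prod, toReducedWord, eval_buildWord, map_list_prod, List.map_ofFn,
    Function.comp_def, bsToHNN_evalLetter hp hq (hθ _), bsToHNN_zpow_a]

end BrittonReduced

theorem horocyclic_iff_k_eq_zero (p q : ℤ) (hp : 1 ≤ p) (hpq : p < q) :
    (∀ (k : ℕ) (αs : Fin (k + 1) → ℤ) (θs : Fin k → Letter),
      (∀ i, θs i = Letter.t ∨ θs i = Letter.T) →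
      BrittonReduced p q (buildWord k αs θs) →
      (eval p q (buildWord k αs θs) ∈ Subgroup.zpowers (evalLetter p q Letter.a) ↔ k = 0)) ∧
    (∀ α β : ℤ, eval p q (aPow α) = eval p q (aPow β) ↔ α = β) := by
  have hp0 : p ≠ 0 := by omega
  have hq0 : q ≠ 0 := by omega
  refine ⟨fun k αs θs hθ hBR => ⟨fun hmem => ?_, ?_⟩, fun α β => ?_⟩
  · have hrange : (toReducedWord hθ hBR).prod (intMultiplesEquiv hp0 hq0) ∈
        (of : Multiplicative ℤ →* BSHNN hp0 hq0).range := by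
      obtain ⟨n, hn⟩ := hmem
      rw [prod_toReducedWord, ← hn]
      exact ⟨ofAdd n, (bsToHNN_zpow_a hp0 hq0 n).symm⟩
    simpa [toReducedWord] using ReducedWord.toList_eq_nil_of_mem_of_range _ _ hrange
  · rintro rfl
    rw [show buildWord 0 αs θs = aPow (αs 0) by simp [buildWord], eval_aPow]
    exact Subgroup.zpow_mem_zpowers _ _
  · rw [eval_aPow, eval_aPow]
    exact (bs_zpow_a_injective hp0 hq0).eq_iff
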